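/- arXiv:1502.00696 — 3 statements merged into one kernel-verified Lean document; each statement's English description precedes it below -/
import Mathlib

section
/- Let α ∈ (0,1), 0 < h₁ < h₂, Δ = h₂ − h₁, and let ζ : (1, 1/α) → (0, ∞) be a function bounded away from zero. Define ψ_α(p) = (1 − α p)^{−1/p} and θ(p) = ψ_α(p) · ζ(p) for p ∈ (1, 1/α), and let φ(x) = 1_{(h₁,∞)}(x)(x − h₁)^{−α} − 1_{(h₂,∞)}(x)(x − h₂)^{−α}, so that φ = Γ(1−α) · D^α[1_{(h₁,h₂)}]. Then the Grand Lebesgue norm satisfies sup_{p ∈ (1, 1/α)} [ ‖φ‖_{L^p(0,∞)} / θ(p) ] ≤ 3 · Δ^{−α} · sup_{p ∈ (1, 1/α)} [ Δ^{1/p} / ζ(p) ]. -/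
/-! For `p < 1/α`, `|φ|^p` is dominated by `(x - h₁)^(-αp)` on `(h₁, h₂]`, by `(x - h₂)^(-αp)`
on `(h₂, h₂ + Δ]`, and beyond `h₂ + Δ` by `(αΔ)^p (x - h₂)^(-(α+1)p)`, which comes from the mean
value theorem for `t ↦ t^(-α)`. Each piece integrates to at most `Δ^(1-αp)/(1-αp)`, so
`‖φ‖_p ≤ 3^(1/p) Δ^(-α) Δ^(1/p) (1-αp)^(-1/p)`; dividing by `θ(p)` cancels `(1-αp)^(-1/p)`. -/

open MeasureTheory Real Set ENNReal

/-- `Γ(1-α)` times the Riemann–Liouville fractional derivative of the indicator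
`1_{(h₁,h₂)}`: `φ(x) = 1_{(h₁,∞)}(x)(x-h₁)^{-α} - 1_{(h₂,∞)}(x)(x-h₂)^{-α}`. -/
noncomputable def fracDerivIndicator (α h₁ h₂ : ℝ) (x : ℝ) : ℝ :=
  Set.indicator (Set.Ioi h₁) (fun y => (y - h₁) ^ (-α)) x -
    Set.indicator (Set.Ioi h₂) (fun y => (y - h₂) ^ (-α)) x

lemma rpow_neg_sub_rpow_neg_le {α a b : ℝ} (hα : 0 ≤ α) (ha : 0 < a) (hab : a < b) :
    a ^ (-α) - b ^ (-α) ≤ α * (b - a) * a ^ (-α - 1) := by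
  obtain ⟨c, ⟨hac, -⟩, hslope⟩ := exists_hasDerivAt_eq_slope (fun t => t ^ (-α))
    (fun t => -α * t ^ (-α - 1)) hab
    (fun x hx =>
      (continuousAt_rpow_const x (-α) (Or.inl (ha.trans_le hx.1).ne')).continuousWithinAt)
    (fun x hx => by simpa using hasDerivAt_rpow_const (p := -α) (Or.inl (ha.trans hx.1).ne'))
  have hmvt : a ^ (-α) - b ^ (-α) = α * (b - a) * c ^ (-α - 1) := by
    rw [eq_div_iff (sub_pos.mpr hab).ne'] at hslope
    linear_combination hslope
  rw [hmvt]
  exact mul_le_mul_of_nonneg_left (rpow_le_rpow_of_nonpos ha hac.le (by linarith))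
    (mul_nonneg hα (sub_pos.mpr hab).le)

lemma integrableOn_Ioc_sub_rpow {r : ℝ} (hr : -1 < r) (c Δ : ℝ) :
    IntegrableOn (fun x => (x - c) ^ r) (Ioc c (c + Δ)) := by
  have := (measurePreserving_sub_right volume c).integrableOn_comp_preimage
    (MeasurableEquiv.subRight c).measurableEmbedding (f := fun x => x ^ r) (s := Ioc 0 Δ)
  rw [preimage_sub_const_Ioc, zero_add, add_comm] at this
  exact this.2 (intervalIntegral.intervalIntegrable_rpow' hr).1

lemma integral_Ioc_sub_rpow {r Δ : ℝ} (hr : -1 < r) (hΔ : 0 ≤ Δ) (c : ℝ) :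
    ∫ x in Ioc c (c + Δ), (x - c) ^ r = Δ ^ (r + 1) / (r + 1) := by
  have := (measurePreserving_sub_right volume c).setIntegral_preimage_emb
    (MeasurableEquiv.subRight c).measurableEmbedding (fun x => x ^ r) (Ioc 0 Δ)
  rw [preimage_sub_const_Ioc, zero_add, add_comm] at this
  rw [this, ← intervalIntegral.integral_of_le hΔ, integral_rpow (Or.inl hr),
    zero_rpow (by linarith), sub_zero]

lemma integrableOn_Ioi_sub_rpow {a Δ : ℝ} (ha : a < -1) (hΔ : 0 < Δ) (c : ℝ) :
    IntegrableOn (fun x => (x - c) ^ a) (Ioi (c + Δ)) := by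
  have := (measurePreserving_sub_right volume c).integrableOn_comp_preimage
    (MeasurableEquiv.subRight c).measurableEmbedding (f := fun x => x ^ a) (s := Ioi Δ)
  rw [preimage_sub_const_Ioi, add_comm] at this
  exact this.2 (integrableOn_Ioi_rpow_of_lt ha hΔ)

lemma integral_Ioi_sub_rpow {a Δ : ℝ} (ha : a < -1) (hΔ : 0 < Δ) (c : ℝ) :
    ∫ x in Ioi (c + Δ), (x - c) ^ a = -Δ ^ (a + 1) / (a + 1) := by
  have := (measurePreserving_sub_right volume c).setIntegral_preimage_emb
    (MeasurableEquiv.subRight c).measurableEmbedding (fun x => x ^ a) (Ioi Δ)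
  rw [preimage_sub_const_Ioi, add_comm] at this
  rw [this, integral_Ioi_rpow_of_lt ha hΔ]

lemma integral_Ioi_mul_sub_rpow_le {α p Δ : ℝ} (hα : 0 < α) (hp : 1 ≤ p) (hαp : α * p < 1)
    (hΔ : 0 < Δ) (c : ℝ) :
    ∫ x in Ioi (c + Δ), (α * Δ) ^ p * (x - c) ^ (-((α + 1) * p)) ≤
      Δ ^ (1 - α * p) / (1 - α * p) := by
  have hq : α ≤ (α + 1) * p - 1 := by nlinarith
  have hαp_le : α ^ p ≤ α := by
    simpa using rpow_le_rpow_of_exponent_ge hα (by nlinarith) hp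
  have hsplit : Δ ^ p * Δ ^ (-((α + 1) * p) + 1) = Δ ^ (1 - α * p) := by
    rw [← rpow_add hΔ]; ring_nf
  calc ∫ x in Ioi (c + Δ), (α * Δ) ^ p * (x - c) ^ (-((α + 1) * p))
      = α ^ p / ((α + 1) * p - 1) * Δ ^ (1 - α * p) := by
        rw [integral_const_mul, integral_Ioi_sub_rpow (by nlinarith) hΔ, mul_rpow hα.le hΔ.le,
          ← hsplit, show -((α + 1) * p) + 1 = -((α + 1) * p - 1) by ring, neg_div_neg_eq]
        ring
    _ ≤ 1 * Δ ^ (1 - α * p) := by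
        gcongr
        exact (div_le_one (by linarith)).mpr (hαp_le.trans hq)
    _ ≤ Δ ^ (1 - α * p) / (1 - α * p) := by
        rw [one_mul]
        exact le_div_self (by positivity) (by linarith) (by nlinarith)

lemma eLpNorm_le_ofReal_rpow_of_abs_rpow_le {X : Type*} [MeasurableSpace X] {μ : Measure X}
    {f g : X → ℝ} {p C : ℝ} (hp : 0 < p) (hg : Integrable g μ)
    (hfg : ∀ᵐ x ∂μ, |f x| ^ p ≤ g x) (hC : ∫ x, g x ∂μ ≤ C) :
    eLpNorm f (ENNReal.ofReal p) μ ≤ ENNReal.ofReal (C ^ (1 / p)) := by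
  have hg_nonneg : 0 ≤ᵐ[μ] g := hfg.mono fun x hx => (by positivity : 0 ≤ |f x| ^ p).trans hx
  have hlintegral : ∫⁻ x, ‖f x‖ₑ ^ p ∂μ ≤ ENNReal.ofReal C :=
    calc ∫⁻ x, ‖f x‖ₑ ^ p ∂μ = ∫⁻ x, ENNReal.ofReal (|f x| ^ p) ∂μ := by
          congr 1 with x
          rw [← ofReal_norm, Real.norm_eq_abs, ofReal_rpow_of_nonneg (abs_nonneg _) hp.le]
      _ ≤ ∫⁻ x, ENNReal.ofReal (g x) ∂μ :=
          lintegral_mono_ae (hfg.mono fun x hx => ofReal_le_ofReal hx)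
      _ = ENNReal.ofReal (∫ x, g x ∂μ) := (ofReal_integral_eq_lintegral_ofReal hg hg_nonneg).symm
      _ ≤ ENNReal.ofReal C := ofReal_le_ofReal hC
  rw [eLpNorm_eq_lintegral_rpow_enorm_toReal (by simpa using hp) ofReal_ne_top, toReal_ofReal hp.le,
    ← ofReal_rpow_of_nonneg ((integral_nonneg_of_ae hg_nonneg).trans hC) (by positivity)]
  exact rpow_le_rpow hlintegral (by positivity)

section FracDerivIndicator

variable {α h₁ h₂ x : ℝ}

lemma fracDerivIndicator_of_le (h12 : h₁ ≤ h₂) (hx : x ≤ h₁) :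
    fracDerivIndicator α h₁ h₂ x = 0 := by
  rw [fracDerivIndicator, indicator_of_notMem (notMem_Ioi.mpr hx),
    indicator_of_notMem (notMem_Ioi.mpr (hx.trans h12)), sub_zero]

lemma fracDerivIndicator_of_mem_Ioc (hx : x ∈ Ioc h₁ h₂) :
    fracDerivIndicator α h₁ h₂ x = (x - h₁) ^ (-α) := by
  rw [fracDerivIndicator, indicator_of_mem (mem_Ioi.mpr hx.1),
    indicator_of_notMem (notMem_Ioi.mpr hx.2), sub_zero]

lemma abs_fracDerivIndicator_of_lt (hα : 0 ≤ α) (h12 : h₁ ≤ h₂) (hx : h₂ < x) :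
    |fracDerivIndicator α h₁ h₂ x| = (x - h₂) ^ (-α) - (x - h₁) ^ (-α) := by
  rw [fracDerivIndicator, indicator_of_mem (mem_Ioi.mpr (h12.trans_lt hx)),
    indicator_of_mem (mem_Ioi.mpr hx), abs_sub_comm, abs_of_nonneg]
  exact sub_nonneg.mpr (rpow_le_rpow_of_nonpos (sub_pos.mpr hx) (by linarith) (by linarith))

noncomputable def fracDerivIndicatorMajorant (α h₁ h₂ p : ℝ) : ℝ → ℝ :=
  (Ioc h₁ h₂).indicator (fun x => (x - h₁) ^ (-(α * p))) +
    (Ioc h₂ (h₂ + (h₂ - h₁))).indicator (fun x => (x - h₂) ^ (-(α * p))) +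
    (Ioi (h₂ + (h₂ - h₁))).indicator
      (fun x => (α * (h₂ - h₁)) ^ p * (x - h₂) ^ (-((α + 1) * p)))

lemma abs_fracDerivIndicator_rpow_le_rpow {p : ℝ} (hα : 0 ≤ α) (h12 : h₁ ≤ h₂) (hp : 0 ≤ p)
    (hx : h₂ < x) : |fracDerivIndicator α h₁ h₂ x| ^ p ≤ (x - h₂) ^ (-(α * p)) := by
  have hx₂ : 0 < x - h₂ := sub_pos.mpr hx
  rw [abs_fracDerivIndicator_of_lt hα h12 hx, ← neg_mul, rpow_mul hx₂.le]
  exact rpow_le_rpow (sub_nonneg.mpr (rpow_le_rpow_of_nonpos hx₂ (by linarith) (by linarith)))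
    (sub_le_self _ (rpow_nonneg (by linarith) _)) hp

lemma abs_fracDerivIndicator_rpow_le_mul_rpow {p : ℝ} (hα : 0 ≤ α) (h12 : h₁ < h₂) (hp : 0 ≤ p)
    (hx : h₂ < x) :
    |fracDerivIndicator α h₁ h₂ x| ^ p ≤ (α * (h₂ - h₁)) ^ p * (x - h₂) ^ (-((α + 1) * p)) := by
  have hx₂ : 0 < x - h₂ := sub_pos.mpr hx
  have hmvt := rpow_neg_sub_rpow_neg_le hα hx₂ (show x - h₂ < x - h₁ by linarith)
  rw [show x - h₁ - (x - h₂) = h₂ - h₁ by ring] at hmvt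
  rw [show -((α + 1) * p) = (-α - 1) * p by ring, rpow_mul hx₂.le,
    ← mul_rpow (mul_nonneg hα (by linarith)) (rpow_nonneg hx₂.le _)]
  exact rpow_le_rpow (abs_nonneg _) ((abs_fracDerivIndicator_of_lt hα h12.le hx).trans_le hmvt) hp

lemma abs_fracDerivIndicator_rpow_le_majorant {p : ℝ} (hα : 0 ≤ α) (h12 : h₁ < h₂)
    (hp : 0 < p) (x : ℝ) :
    |fracDerivIndicator α h₁ h₂ x| ^ p ≤ fracDerivIndicatorMajorant α h₁ h₂ p x := by
  set Δ := h₂ - h₁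
  have hΔ : 0 < Δ := sub_pos.mpr h12
  have hfirst : 0 ≤ (Ioc h₁ h₂).indicator (fun x => (x - h₁) ^ (-(α * p))) x :=
    indicator_nonneg (fun y hy => rpow_nonneg (sub_nonneg.mpr hy.1.le) _) x
  have hsecond : 0 ≤ (Ioc h₂ (h₂ + Δ)).indicator (fun x => (x - h₂) ^ (-(α * p))) x :=
    indicator_nonneg (fun y hy => rpow_nonneg (sub_nonneg.mpr hy.1.le) _) x
  have hthird : 0 ≤ (Ioi (h₂ + Δ)).indicator
      (fun x => (α * Δ) ^ p * (x - h₂) ^ (-((α + 1) * p))) x :=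
    indicator_nonneg (fun y (hy : _ < y) => by
      have : 0 ≤ y - h₂ := by linarith
      positivity) x
  simp only [fracDerivIndicatorMajorant, Pi.add_apply]
  rcases le_or_gt x h₁ with hx₁ | hx₁
  · rw [fracDerivIndicator_of_le h12.le hx₁, abs_zero, zero_rpow hp.ne']
    positivity
  rcases le_or_gt x h₂ with hx₂ | hx₂
  · rw [fracDerivIndicator_of_mem_Ioc ⟨hx₁, hx₂⟩,
      indicator_of_mem (show x ∈ Ioc h₁ h₂ from ⟨hx₁, hx₂⟩),
      abs_of_nonneg (rpow_nonneg (sub_pos.mpr hx₁).le _), ← rpow_mul (sub_pos.mpr hx₁).le,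
      neg_mul]
    linarith
  rcases le_or_gt x (h₂ + Δ) with hx₃ | hx₃
  · rw [indicator_of_mem (show x ∈ Ioc h₂ (h₂ + Δ) from ⟨hx₂, hx₃⟩)]
    linarith [abs_fracDerivIndicator_rpow_le_rpow hα h12.le hp.le hx₂]
  · rw [indicator_of_mem (mem_Ioi.mpr hx₃)]
    linarith [abs_fracDerivIndicator_rpow_le_mul_rpow hα h12 hp.le hx₂]

variable {p : ℝ}

lemma integrable_fracDerivIndicatorMajorant (hα : 0 < α) (h12 : h₁ < h₂) (hp : 1 ≤ p)
    (hαp : α * p < 1) : Integrable (fracDerivIndicatorMajorant α h₁ h₂ p) := by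
  refine Integrable.add (Integrable.add ?_ ?_) ?_ <;>
    refine (integrable_indicator_iff (by measurability)).mpr ?_
  · simpa using integrableOn_Ioc_sub_rpow (by linarith) h₁ (h₂ - h₁)
  · exact integrableOn_Ioc_sub_rpow (by linarith) h₂ (h₂ - h₁)
  · exact (integrableOn_Ioi_sub_rpow (by nlinarith) (sub_pos.mpr h12) h₂).const_mul _

lemma integral_fracDerivIndicatorMajorant_le (hα : 0 < α) (h12 : h₁ < h₂) (hp : 1 ≤ p)
    (hαp : α * p < 1) :
    ∫ x, fracDerivIndicatorMajorant α h₁ h₂ p x ≤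
      3 * (h₂ - h₁) ^ (1 - α * p) / (1 - α * p) := by
  simp only [fracDerivIndicatorMajorant]
  set Δ := h₂ - h₁
  have hΔ : 0 < Δ := sub_pos.mpr h12
  have hs : 0 < 1 - α * p := by linarith
  have hint₁ : IntegrableOn (fun x => (x - h₁) ^ (-(α * p))) (Ioc h₁ h₂) := by
    simpa [Δ] using integrableOn_Ioc_sub_rpow (by linarith) h₁ Δ
  have hint₂ : IntegrableOn (fun x => (x - h₂) ^ (-(α * p))) (Ioc h₂ (h₂ + Δ)) :=
    integrableOn_Ioc_sub_rpow (by linarith) h₂ Δ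
  have hint₃ : IntegrableOn (fun x => (α * Δ) ^ p * (x - h₂) ^ (-((α + 1) * p)))
      (Ioi (h₂ + Δ)) := (integrableOn_Ioi_sub_rpow (by nlinarith) hΔ h₂).const_mul _
  have hI₁ : ∫ x in Ioc h₁ h₂, (x - h₁) ^ (-(α * p)) = Δ ^ (1 - α * p) / (1 - α * p) := by
    simpa [Δ, neg_add_eq_sub] using
      integral_Ioc_sub_rpow (by linarith : -1 < -(α * p)) hΔ.le h₁
  have hI₂ : ∫ x in Ioc h₂ (h₂ + Δ), (x - h₂) ^ (-(α * p)) = Δ ^ (1 - α * p) / (1 - α * p) := by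
    simpa [neg_add_eq_sub] using integral_Ioc_sub_rpow (by linarith : -1 < -(α * p)) hΔ.le h₂
  have hI₃ := integral_Ioi_mul_sub_rpow_le hα hp hαp hΔ h₂
  rw [integral_add' ((hint₁.integrable_indicator measurableSet_Ioc).add
      (hint₂.integrable_indicator measurableSet_Ioc))
      (hint₃.integrable_indicator measurableSet_Ioi),
    integral_add' (hint₁.integrable_indicator measurableSet_Ioc)
      (hint₂.integrable_indicator measurableSet_Ioc),
    integral_indicator measurableSet_Ioc, integral_indicator measurableSet_Ioc,
    integral_indicator measurableSet_Ioi, hI₁, hI₂, mul_div_assoc]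
  linarith

lemma eLpNorm_fracDerivIndicator_le (hα : 0 < α) (h12 : h₁ < h₂) (hp : 1 ≤ p)
    (hαp : α * p < 1) :
    eLpNorm (fracDerivIndicator α h₁ h₂) (ENNReal.ofReal p) ≤
      ENNReal.ofReal (3 * (h₂ - h₁) ^ (-α) * (h₂ - h₁) ^ (1 / p) * (1 - α * p) ^ (-(1 / p))) := by
  have hp₀ : 0 < p := by linarith
  have hΔ : 0 < h₂ - h₁ := sub_pos.mpr h12
  have hs : 0 < 1 - α * p := by linarith
  refine (eLpNorm_le_ofReal_rpow_of_abs_rpow_le hp₀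
    (integrable_fracDerivIndicatorMajorant hα h12 hp hαp)
    (ae_of_all _ (abs_fracDerivIndicator_rpow_le_majorant hα.le h12 hp₀))
    (integral_fracDerivIndicatorMajorant_le hα h12 hp hαp)).trans (ofReal_le_ofReal ?_)
  have h3 : (3 : ℝ) ^ (1 / p) ≤ 3 := by
    simpa using rpow_le_rpow_of_exponent_le (by norm_num : (1 : ℝ) ≤ 3)
      ((div_le_one hp₀).mpr hp)
  calc (3 * (h₂ - h₁) ^ (1 - α * p) / (1 - α * p)) ^ (1 / p)
      = 3 ^ (1 / p) * (h₂ - h₁) ^ (-α) * (h₂ - h₁) ^ (1 / p) * (1 - α * p) ^ (-(1 / p)) := by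
        rw [div_eq_mul_inv, mul_rpow (by positivity) (by positivity),
          mul_rpow (by norm_num) (by positivity), ← rpow_mul hΔ.le,
          show (1 - α * p) * (1 / p) = -α + 1 / p by field_simp; ring,
          rpow_add hΔ, inv_rpow hs.le, ← rpow_neg hs.le]
        ring
    _ ≤ 3 * (h₂ - h₁) ^ (-α) * (h₂ - h₁) ^ (1 / p) * (1 - α * p) ^ (-(1 / p)) := by gcongr

end FracDerivIndicator

theorem stmt_9_general (α h₁ h₂ : ℝ) (hα : α ∈ Set.Ioo (0 : ℝ) 1) (h12 : h₁ < h₂)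
    (ζ : ℝ → ℝ) (hζpos : ∀ p ∈ Set.Ioo (1 : ℝ) (1 / α), 0 < ζ p) :
    (⨆ p ∈ Set.Ioo (1 : ℝ) (1 / α),
        eLpNorm (fracDerivIndicator α h₁ h₂) (ENNReal.ofReal p)
            (volume.restrict (Set.Ioi (0 : ℝ))) /
          ENNReal.ofReal ((1 - α * p) ^ (-(1 / p)) * ζ p)) ≤
      ENNReal.ofReal (3 * (h₂ - h₁) ^ (-α)) *
        ⨆ p ∈ Set.Ioo (1 : ℝ) (1 / α), ENNReal.ofReal ((h₂ - h₁) ^ (1 / p) / ζ p) := by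
  refine iSup₂_le fun p hp => ?_
  have hαp : α * p < 1 := (lt_div_iff₀' hα.1).mp hp.2
  have hΔ : 0 < h₂ - h₁ := sub_pos.mpr h12
  have hs : 0 < 1 - α * p := by linarith
  have hζ := hζpos p hp
  calc eLpNorm (fracDerivIndicator α h₁ h₂) (ENNReal.ofReal p) (volume.restrict (Ioi 0)) /
        ENNReal.ofReal ((1 - α * p) ^ (-(1 / p)) * ζ p)
      ≤ ENNReal.ofReal (3 * (h₂ - h₁) ^ (-α) * (h₂ - h₁) ^ (1 / p) * (1 - α * p) ^ (-(1 / p))) /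
          ENNReal.ofReal ((1 - α * p) ^ (-(1 / p)) * ζ p) := by
        gcongr
        exact (eLpNorm_mono_measure _ Measure.restrict_le_self).trans
          (eLpNorm_fracDerivIndicator_le hα.1 h12 hp.1.le hαp)
    _ = ENNReal.ofReal (3 * (h₂ - h₁) ^ (-α)) * ENNReal.ofReal ((h₂ - h₁) ^ (1 / p) / ζ p) := by
        rw [← ofReal_div_of_pos (by positivity), ← ofReal_mul (by positivity)]
        congr 1
        field_simp
    _ ≤ _ := by
        gcongr
        exact le_iSup₂ (f := fun q (_ : q ∈ Ioo (1 : ℝ) (1 / α)) =>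
          ENNReal.ofReal ((h₂ - h₁) ^ (1 / q) / ζ q)) p hp

/-- Grand Lebesgue norm estimate for the fractional derivative of an indicator:
with `θ(p) = (1-αp)^{-1/p} ζ(p)`,
`‖φ‖Gθ = sup_p ‖φ‖_p/θ(p) ≤ 3 Δ^{-α} sup_p Δ^{1/p}/ζ(p) = 3 Δ^{-α} φ(Gζ, Δ)`. -/
theorem stmt_9 (α h₁ h₂ : ℝ) (hα : α ∈ Set.Ioo (0 : ℝ) 1) (h1 : 0 < h₁) (h12 : h₁ < h₂)
    (ζ : ℝ → ℝ) (hζpos : ∀ p ∈ Set.Ioo (1 : ℝ) (1 / α), 0 < ζ p)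
    (hζ : ∃ ε : ℝ, 0 < ε ∧ ∀ p ∈ Set.Ioo (1 : ℝ) (1 / α), ε ≤ ζ p) :
    (⨆ p ∈ Set.Ioo (1 : ℝ) (1 / α),
        eLpNorm (fracDerivIndicator α h₁ h₂) (ENNReal.ofReal p)
            (volume.restrict (Set.Ioi (0 : ℝ))) /
          ENNReal.ofReal ((1 - α * p) ^ (-(1 / p)) * ζ p)) ≤
      ENNReal.ofReal (3 * (h₂ - h₁) ^ (-α)) *
        ⨆ p ∈ Set.Ioo (1 : ℝ) (1 / α), ENNReal.ofReal ((h₂ - h₁) ^ (1 / p) / ζ p) :=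
  stmt_9_general α h₁ h₂ hα h12 ζ hζpos
end

section
/- Let α ∈ (0,1), 0 < b ≤ ∞, 1 < β ≤ 1/α, and let f : (0,b) → ℝ be measurable (extended by zero) such that ψ(p) := ‖f‖_{B^{(α)}_p} < ∞ for every p ∈ (1, β). Then sup_{p ∈ (1, β)} [ ‖D^α[f]‖_{L^p(0,b)} / ψ(p) ] ≤ 1/Γ(1−α), where D^α is the Marchaud fractional derivative of order α; that is, the Grand Lebesgue norm of D^α[f] generated by the Besov natural function ψ is at most 1/Γ(1−α). -/
/-!
Substituting `t = x - s`, the integral term of `D^α[f](x)` is `∫_0^x (f(x) - f(x - s)) s^{-1-α} ds`.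
By Minkowski's integral inequality its `L^p(0,b)` norm is at most
`∫_0^b s^{-1-α} ‖f(· - s) - f‖_p ds ≤ ∫_0^b s^{-1-α} ω_p(f, s) ds`, so the triangle inequality gives
`‖D^α[f]‖_p ≤ ‖f‖_{B^{(α)}_p} / Γ(1-α)` for every single `p ≥ 1`, and hence for the supremum.
-/

open MeasureTheory Real Set ENNReal

/-- The Marchaud fractional derivative
`D^α[f](x) = (1/Γ(1-α)) [x^{-α} f(x) + α ∫_0^x (f(x)-f(t))(x-t)^{-1-α} dt]`. -/
noncomputable def marchaud (α : ℝ) (f : ℝ → ℝ) (x : ℝ) : ℝ :=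
  (1 / Real.Gamma (1 - α)) *
    (x ^ (-α) * f x + α * ∫ t in (0 : ℝ)..x, (f x - f t) * (x - t) ^ (-1 - α))

/-- The `L^p` modulus of continuity `ω_p(f,δ) = sup_{|h| ≤ δ} ‖f(·+h) - f(·)‖_{L^p(ℝ)}`. -/
noncomputable def modulusLp (p : ℝ≥0∞) (f : ℝ → ℝ) (δ : ℝ) : ℝ≥0∞ :=
  ⨆ h ∈ Set.Icc (-δ) δ, eLpNorm (fun x => f (x + h) - f x) p volume

/-- The interval `(0,b)` for `b : ℝ≥0∞` (allowing `b = ∞`), as a subset of `ℝ`. -/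
def intervalOf (b : ℝ≥0∞) : Set ℝ := {x : ℝ | 0 < x ∧ ENNReal.ofReal x < b}

/-- The modified Besov norm
`‖f‖_{B^α_p} = ‖x^{-α} f(x)‖_{L^p(0,b)} + α ∫_0^b t^{-1-α} ω_p(f,t) dt`. -/
noncomputable def besovNorm (α p : ℝ) (b : ℝ≥0∞) (f : ℝ → ℝ) : ℝ≥0∞ :=
  eLpNorm (fun x => x ^ (-α) * f x) (ENNReal.ofReal p) (volume.restrict (intervalOf b)) +
    ENNReal.ofReal α *
      ∫⁻ t in intervalOf b, ENNReal.ofReal (t ^ (-1 - α)) * modulusLp (ENNReal.ofReal p) f t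

section Minkowski

variable {X Y : Type*} [MeasurableSpace X] [MeasurableSpace Y] {μ : Measure X} {ν : Measure Y}

theorem ENNReal.rpow_one_div_le_of_le_mul_rpow {A R : ℝ≥0∞} {p q : ℝ} (hpq : p.HolderConjugate q)
    (hA : A ≠ ∞) (h : A ≤ R * A ^ (1 / q)) : A ^ (1 / p) ≤ R := by
  rcases eq_or_ne A 0 with rfl | hA₀
  · rw [zero_rpow_of_pos hpq.one_div_pos]
    exact zero_le
  have hsplit : A ^ (1 / p) * A ^ (1 / q) = A := by
    rw [← ENNReal.rpow_add _ _ hA₀ hA, hpq.one_div_add_one_div, div_one, ENNReal.rpow_one]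
  refine (ENNReal.mul_le_mul_iff_left (c := A ^ (1 / q)) ?_ ?_).1 (by rwa [hsplit])
  · simp [hA₀, hpq.symm.nonneg]
  · simp [hA, hpq.symm.nonneg]

theorem exists_monotone_approx_lintegral_rpow_ne_top [SigmaFinite μ] {H : X → ℝ≥0∞}
    (hH : Measurable H) {p : ℝ} (hp : 0 < p) :
    ∃ G : ℕ → X → ℝ≥0∞, (∀ n, Measurable (G n)) ∧ Monotone G ∧ (∀ n, G n ≤ H) ∧
      (∀ x, ⨆ n, G n x = H x) ∧ ∀ n, ∫⁻ x, G n x ^ p ∂μ ≠ ∞ := by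
  set cutoff : ℕ → X → ℝ≥0∞ := fun n ↦ (spanningSets μ n).indicator fun _ ↦ (n : ℝ≥0∞)
  refine ⟨fun n x ↦ H x ⊓ cutoff n x, fun n ↦ hH.min <| measurable_const.indicator
    (measurableSet_spanningSets μ n), fun n m hnm x ↦ inf_le_inf_left _ ?_,
    fun n x ↦ inf_le_left, ?_, fun n ↦ ?_⟩
  · by_cases hx : x ∈ spanningSets μ n
    · simp [cutoff, hx, monotone_spanningSets μ hnm hx, hnm]
    · simp [cutoff, hx]
  · intro x
    obtain ⟨N, hN⟩ := mem_iUnion.1 (iUnion_spanningSets μ ▸ mem_univ x)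
    have : ⨆ n, cutoff n x = ∞ := by
      refine eq_top_iff.2 (iSup_natCast ▸ iSup_le fun n ↦ le_iSup_of_le (n + N) ?_)
      simp only [cutoff, indicator_of_mem (monotone_spanningSets μ (Nat.le_add_left N n) hN)]
      exact_mod_cast Nat.le_add_right n N
    simp only [← inf_iSup_eq, this, inf_top_eq]
  · refine ne_top_of_le_ne_top (b := (n : ℝ≥0∞) ^ p * μ (spanningSets μ n)) ?_ ?_
    · exact mul_ne_top (rpow_ne_top_of_nonneg hp.le (natCast_ne_top n))
        (measure_spanningSets_lt_top μ n).ne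
    rw [← setLIntegral_const, ← lintegral_indicator (measurableSet_spanningSets μ n)]
    refine lintegral_mono fun x ↦ ?_
    by_cases hx : x ∈ spanningSets μ n
    · simpa [cutoff, hx] using rpow_le_rpow (inf_le_right (a := H x)) hp.le
    · simp [cutoff, hx, zero_rpow_of_pos hp]

theorem lintegral_lintegral_mul_rpow_le [SFinite μ] [SFinite ν] {p q : ℝ}
    (hpq : p.HolderConjugate q) {F : X → Y → ℝ≥0∞} (hF : Measurable (Function.uncurry F))
    {G : X → ℝ≥0∞} (hG : Measurable G) :
    ∫⁻ x, (∫⁻ y, F x y ∂ν) * G x ^ (p - 1) ∂μ ≤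
      (∫⁻ y, (∫⁻ x, F x y ^ p ∂μ) ^ (1 / p) ∂ν) * (∫⁻ x, G x ^ p ∂μ) ^ (1 / q) := by
  have hGq : Measurable fun x ↦ G x ^ (p - 1) := hG.pow_const _
  have hGpow : ∫⁻ x, (G x ^ (p - 1)) ^ q ∂μ = ∫⁻ x, G x ^ p ∂μ := by
    simp_rw [← ENNReal.rpow_mul, hpq.sub_one_mul_conj]
  calc ∫⁻ x, (∫⁻ y, F x y ∂ν) * G x ^ (p - 1) ∂μ
      = ∫⁻ y, ∫⁻ x, F x y * G x ^ (p - 1) ∂μ ∂ν := by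
        simp_rw [← lintegral_mul_const _ hF.of_uncurry_left]
        exact lintegral_lintegral_swap (hF.mul (hGq.comp measurable_fst)).aemeasurable
    _ ≤ ∫⁻ y, (∫⁻ x, F x y ^ p ∂μ) ^ (1 / p) * (∫⁻ x, G x ^ p ∂μ) ^ (1 / q) ∂ν :=
        lintegral_mono fun y ↦ hGpow ▸ ENNReal.lintegral_mul_le_Lp_mul_Lq μ hpq
          hF.of_uncurry_right.aemeasurable hGq.aemeasurable
    _ = _ := lintegral_mul_const _ (((hF.pow_const p).lintegral_prod_left' (μ := μ)).pow_const _)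

/-- Minkowski's integral inequality. -/
theorem lintegral_rpow_lintegral_le [SigmaFinite μ] [SFinite ν] {p : ℝ} (hp : 1 ≤ p)
    {F : X → Y → ℝ≥0∞} (hF : Measurable (Function.uncurry F)) :
    (∫⁻ x, (∫⁻ y, F x y ∂ν) ^ p ∂μ) ^ (1 / p) ≤ ∫⁻ y, (∫⁻ x, F x y ^ p ∂μ) ^ (1 / p) ∂ν := by
  rcases hp.eq_or_lt with rfl | hp
  · simp only [ENNReal.rpow_one, div_one]
    exact (lintegral_lintegral_swap hF.aemeasurable).le
  have hpq := Real.HolderConjugate.conjExponent hp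
  -- Truncations `G n ↑ H` have `∫ G n ^ p < ∞`, which Hölder's bound lets us divide out.
  obtain ⟨G, hGm, hGmono, hGH, hGsup, hGfin⟩ :=
    exists_monotone_approx_lintegral_rpow_ne_top (μ := μ) (hF.lintegral_prod_right (ν := ν))
      (zero_lt_one.trans hp)
  have hpow : ∀ n x, G n x ^ p ≤ (∫⁻ y, F x y ∂ν) * G n x ^ (p - 1) := fun n x ↦ by
    calc G n x ^ p = G n x ^ (1 : ℝ) * G n x ^ (p - 1) := by
          rw [← rpow_add_of_nonneg _ _ zero_le_one (by linarith), add_sub_cancel]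
      _ ≤ _ := by rw [ENNReal.rpow_one]; gcongr; exact hGH n x
  have hG : ∀ n, (∫⁻ x, G n x ^ p ∂μ) ^ (1 / p) ≤ ∫⁻ y, (∫⁻ x, F x y ^ p ∂μ) ^ (1 / p) ∂ν :=
    fun n ↦ rpow_one_div_le_of_le_mul_rpow hpq (hGfin n) <|
      (lintegral_mono (hpow n)).trans (lintegral_lintegral_mul_rpow_le hpq hF (hGm n))
  have hp₀ : 0 < p := zero_lt_one.trans hp
  calc (∫⁻ x, (∫⁻ y, F x y ∂ν) ^ p ∂μ) ^ (1 / p)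
      = (⨆ n, ∫⁻ x, G n x ^ p ∂μ) ^ (1 / p) := by
        rw [← lintegral_iSup (fun n ↦ (hGm n).pow_const p)
          (fun n m hnm x ↦ rpow_le_rpow (hGmono hnm x) hp₀.le)]
        refine congrArg (· ^ (1 / p)) (lintegral_congr fun x ↦ ?_)
        rw [← hGsup x]
        exact (orderIsoRpow p hp₀).map_iSup _
    _ = ⨆ n, (∫⁻ x, G n x ^ p ∂μ) ^ (1 / p) := (orderIsoRpow (1 / p) (by positivity)).map_iSup _
    _ ≤ _ := iSup_le hG

theorem eLpNorm_integral_le_lintegral_eLpNorm {E : Type*} [NormedAddCommGroup E]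
    [NormedSpace ℝ E] [SigmaFinite μ] [SFinite ν] {p : ℝ≥0∞} (hp : 1 ≤ p) (hp_top : p ≠ ∞)
    {K : X → Y → E} (hK : StronglyMeasurable (Function.uncurry K)) :
    eLpNorm (fun x ↦ ∫ y, K x y ∂ν) p μ ≤ ∫⁻ y, eLpNorm (fun x ↦ K x y) p μ ∂ν := by
  have hp₀ : p ≠ 0 := (zero_lt_one.trans_le hp).ne'
  simp only [eLpNorm_eq_lintegral_rpow_enorm_toReal hp₀ hp_top]
  calc (∫⁻ x, ‖∫ y, K x y ∂ν‖ₑ ^ p.toReal ∂μ) ^ (1 / p.toReal)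
      ≤ (∫⁻ x, (∫⁻ y, ‖K x y‖ₑ ∂ν) ^ p.toReal ∂μ) ^ (1 / p.toReal) := by
        gcongr with x
        exact enorm_integral_le_lintegral_enorm _
    _ ≤ _ := lintegral_rpow_lintegral_le (by simpa using (toReal_le_toReal one_ne_top hp_top).2 hp)
        hK.enorm

end Minkowski

section Marchaud

variable {α : ℝ} {f : ℝ → ℝ} {b : ℝ≥0∞}

theorem measurableSet_intervalOf (b : ℝ≥0∞) : MeasurableSet (intervalOf b) :=
  measurableSet_Ioi.inter (measurable_ofReal measurableSet_Iio)

theorem Ioc_subset_intervalOf {x : ℝ} (hx : x ∈ intervalOf b) : Ioc 0 x ⊆ intervalOf b :=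
  fun _ hs ↦ ⟨hs.1, (ofReal_le_ofReal hs.2).trans_lt hx.2⟩

noncomputable def marchaudIntegral (α : ℝ) (f : ℝ → ℝ) (x : ℝ) : ℝ :=
  ∫ t in (0 : ℝ)..x, (f x - f t) * (x - t) ^ (-1 - α)

theorem marchaud_eq (α : ℝ) (f : ℝ → ℝ) :
    marchaud α f = (1 / Gamma (1 - α)) • ((fun x ↦ x ^ (-α) * f x) + α • marchaudIntegral α f) :=
  rfl

/-- The integrand of `marchaudIntegral α f x` after the substitution `t = x - s`. -/
noncomputable def marchaudKernel (α : ℝ) (f : ℝ → ℝ) (x s : ℝ) : ℝ :=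
  (Ioc 0 x).indicator (fun s ↦ (f x - f (x - s)) * s ^ (-1 - α)) s

theorem measurable_marchaudKernel (hf : Measurable f) :
    Measurable (Function.uncurry (marchaudKernel α f)) := by
  have hset : MeasurableSet {z : ℝ × ℝ | z.2 ∈ Ioc 0 z.1} :=
    (measurableSet_lt measurable_const measurable_snd).inter
      (measurableSet_le measurable_snd measurable_fst)
  exact Measurable.ite hset (by fun_prop) measurable_const

theorem marchaudIntegral_eq_setIntegral_marchaudKernel {x : ℝ} (hx : x ∈ intervalOf b) :
    marchaudIntegral α f x = ∫ s in intervalOf b, marchaudKernel α f x s := by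
  calc marchaudIntegral α f x = ∫ s in (0 : ℝ)..x, (f x - f (x - s)) * s ^ (-1 - α) := by
        simp only [marchaudIntegral]
        simpa using (intervalIntegral.integral_comp_sub_left
          (fun t ↦ (f x - f t) * (x - t) ^ (-1 - α)) x (a := 0) (b := x)).symm
    _ = ∫ s in Ioc 0 x, (f x - f (x - s)) * s ^ (-1 - α) := intervalIntegral.integral_of_le hx.1.le
    _ = _ := by
        simp only [marchaudKernel]
        rw [setIntegral_indicator measurableSet_Ioc,
          inter_eq_self_of_subset_right (Ioc_subset_intervalOf hx)]

theorem marchaudIntegral_ae_eq (α : ℝ) (f : ℝ → ℝ) (b : ℝ≥0∞) :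
    marchaudIntegral α f =ᵐ[volume.restrict (intervalOf b)]
      fun x ↦ ∫ s in intervalOf b, marchaudKernel α f x s :=
  (ae_restrict_iff' (measurableSet_intervalOf b)).2 <| ae_of_all _ fun _ hx ↦
    marchaudIntegral_eq_setIntegral_marchaudKernel hx

theorem aestronglyMeasurable_marchaudIntegral (hf : Measurable f) (b : ℝ≥0∞) :
    AEStronglyMeasurable (marchaudIntegral α f) (volume.restrict (intervalOf b)) :=
  ((measurable_marchaudKernel hf).stronglyMeasurable.integral_prod_right'
    (ν := volume.restrict (intervalOf b))).aestronglyMeasurable.congr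
    (marchaudIntegral_ae_eq α f b).symm

theorem eLpNorm_marchaudKernel_le (α : ℝ) (f : ℝ → ℝ) {s : ℝ} (hs : 0 ≤ s) (p : ℝ≥0∞)
    {μ : Measure ℝ} (hμ : μ ≤ volume) :
    eLpNorm (fun x ↦ marchaudKernel α f x s) p μ ≤
      ENNReal.ofReal (s ^ (-1 - α)) * modulusLp p f s := by
  calc eLpNorm (fun x ↦ marchaudKernel α f x s) p μ
      ≤ eLpNorm (s ^ (-1 - α) • fun x ↦ f (x + -s) - f x) p μ := by
        refine eLpNorm_mono_enorm fun x ↦ (enorm_indicator_le_enorm_self _ s).trans_eq ?_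
        rw [Pi.smul_apply, smul_eq_mul, mul_comm, ← sub_eq_add_neg, ← neg_sub (f x), mul_neg,
          enorm_neg]
    _ ≤ eLpNorm (s ^ (-1 - α) • fun x ↦ f (x + -s) - f x) p volume := eLpNorm_mono_measure _ hμ
    _ = ENNReal.ofReal (s ^ (-1 - α)) * eLpNorm (fun x ↦ f (x + -s) - f x) p volume := by
        rw [eLpNorm_const_smul, Real.enorm_eq_ofReal (rpow_nonneg hs _)]
    _ ≤ _ := by
        gcongr
        exact le_biSup (fun h ↦ eLpNorm (fun x ↦ f (x + h) - f x) p volume)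
          (⟨le_rfl, by linarith⟩ : -s ∈ Icc (-s) s)

theorem eLpNorm_marchaudIntegral_le (hf : Measurable f) (b : ℝ≥0∞) {p : ℝ≥0∞} (hp : 1 ≤ p)
    (hp_top : p ≠ ∞) :
    eLpNorm (marchaudIntegral α f) p (volume.restrict (intervalOf b)) ≤
      ∫⁻ t in intervalOf b, ENNReal.ofReal (t ^ (-1 - α)) * modulusLp p f t := by
  calc eLpNorm (marchaudIntegral α f) p (volume.restrict (intervalOf b))
      = eLpNorm (fun x ↦ ∫ s in intervalOf b, marchaudKernel α f x s) p
          (volume.restrict (intervalOf b)) := eLpNorm_congr_ae (marchaudIntegral_ae_eq α f b)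
    _ ≤ ∫⁻ s in intervalOf b,
          eLpNorm (fun x ↦ marchaudKernel α f x s) p (volume.restrict (intervalOf b)) :=
        eLpNorm_integral_le_lintegral_eLpNorm hp hp_top
          (measurable_marchaudKernel hf).stronglyMeasurable
    _ ≤ _ := setLIntegral_mono' (measurableSet_intervalOf b) fun s hs ↦
        eLpNorm_marchaudKernel_le α f hs.1.le p Measure.restrict_le_self

theorem eLpNorm_marchaud_le_besovNorm (hα₀ : 0 ≤ α) (hα₁ : α < 1) (hf : Measurable f)
    (b : ℝ≥0∞) {p : ℝ} (hp : 1 ≤ p) :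
    eLpNorm (marchaud α f) (ENNReal.ofReal p) (volume.restrict (intervalOf b)) ≤
      ENNReal.ofReal (1 / Gamma (1 - α)) * besovNorm α p b f := by
  have hΓ : 0 < 1 / Gamma (1 - α) := one_div_pos.2 (Gamma_pos_of_pos (by linarith))
  rw [marchaud_eq, eLpNorm_const_smul, Real.enorm_eq_ofReal hΓ.le, besovNorm]
  gcongr
  refine (eLpNorm_add_le (by fun_prop) ((aestronglyMeasurable_marchaudIntegral hf b).const_smul α)
    (one_le_ofReal.2 hp)).trans ?_
  rw [eLpNorm_const_smul, Real.enorm_eq_ofReal hα₀]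
  gcongr
  exact eLpNorm_marchaudIntegral_le hf b (one_le_ofReal.2 hp) ofReal_ne_top

end Marchaud

theorem stmt_15_general (α β : ℝ) (hα : α ∈ Set.Ioo (0 : ℝ) 1) (b : ℝ≥0∞) (f : ℝ → ℝ)
    (hmeas : Measurable f) :
    (⨆ p ∈ Set.Ioo (1 : ℝ) β,
        eLpNorm (marchaud α f) (ENNReal.ofReal p) (volume.restrict (intervalOf b)) /
          besovNorm α p b f) ≤
      ENNReal.ofReal (1 / Real.Gamma (1 - α)) :=
  iSup₂_le fun _ hp ↦ ENNReal.div_le_of_le_mul <|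
    eLpNorm_marchaud_le_besovNorm hα.1.le hα.2 hmeas b hp.1.le

/-- Grand Lebesgue norm bound via the Besov natural function `ψ(p) = ‖f‖_{B^α_p}`:
`sup_{p ∈ (1,β)} ‖D^α f‖_{L^p(0,b)} / ψ(p) ≤ 1/Γ(1-α)`. -/
theorem stmt_15 (α β : ℝ) (hα : α ∈ Set.Ioo (0 : ℝ) 1) (hβ : 1 < β) (hβ2 : β ≤ 1 / α)
    (b : ℝ≥0∞) (hb : 0 < b) (f : ℝ → ℝ) (hmeas : Measurable f)
    (hf0 : ∀ x : ℝ, x ∉ intervalOf b → f x = 0)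
    (hfin : ∀ p ∈ Set.Ioo (1 : ℝ) β, besovNorm α p b f ≠ ⊤) :
    (⨆ p ∈ Set.Ioo (1 : ℝ) β,
        eLpNorm (marchaud α f) (ENNReal.ofReal p) (volume.restrict (intervalOf b)) /
          besovNorm α p b f) ≤
      ENNReal.ofReal (1 / Real.Gamma (1 - α)) :=
  stmt_15_general α β hα b f hmeas
end

section
/- Let α ∈ (0,1), p ∈ (1, 1/α), and let f₀(x) = x^{−1} · 1_{(1,∞)}(x) on (0,∞). Then ‖f₀‖_{L^p(0,∞)} = (p − 1)^{−1/p}, and there exists a constant c(α) > 0, independent of p, such that with q defined by 1/q = 1/p − α, ‖Γ(α) · I^α[f₀]‖_{L^q(0,∞)} ≥ c(α) · (p − 1)^{−1 − 1/q} for all p in a right neighborhood (1, 1 + δ(α)) of 1; consequently ‖I^α[f₀]‖_q / ‖f₀‖_p ≥ c'(α) · (p − 1)^{α − 1} as p → 1+. -/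
open MeasureTheory Real Set ENNReal

/-- The Riemann–Liouville fractional integral
`I^α[φ](x) = (1/Γ(α)) ∫_0^x φ(t) (x-t)^{α-1} dt`. -/
noncomputable def fracInt (α : ℝ) (φ : ℝ → ℝ) (x : ℝ) : ℝ :=
  (1 / Real.Gamma α) * ∫ t in (0 : ℝ)..x, φ t * (x - t) ^ (α - 1)

/-! For `x > 2`, keeping only `t ∈ (1, x/2]` in `Γ(α) I^α[f₀](x) = ∫₁ˣ t⁻¹ (x - t)^(α-1) dt` and
using `(x - t)^(α-1) ≥ x^(α-1)` gives `Γ(α) I^α[f₀](x) ≥ x^(α-1) log (x/2)`. Put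
`β = (1 - α) q - 1 = (p - 1) / (1 - α p)`, the decay rate of `x^((α-1) q)`. Beyond `R = 2 e^(1/β)`
the logarithm is at least `1/β`, so `‖Γ(α) I^α f₀‖_q^q ≥ β^(-q) ∫_R^∞ x^((α-1) q) dx
= β^(-q-1) R^(-β) ≥ β^(-q-1) / (2e)`, and `β ≍ p - 1` as `p → 1`. Finally
`‖f₀‖_p = (p - 1)^(-1/p)` and `1/p - 1/q = α` turn `(p - 1)^(-1-1/q)` into `(p - 1)^(α-1) ‖f₀‖_p`. -/

lemma lintegral_Ioi_ofReal_rpow {a c : ℝ} (ha : a < -1) (hc : 0 < c) :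
    ∫⁻ x in Ioi c, ENNReal.ofReal (x ^ a) = ENNReal.ofReal (c ^ (a + 1) / -(a + 1)) := by
  rw [← ofReal_integral_eq_lintegral_ofReal (integrableOn_Ioi_rpow_of_lt ha hc)
    (ae_restrict_of_forall_mem measurableSet_Ioi fun x hx => (rpow_pos_of_pos (hc.trans hx) a).le),
    integral_Ioi_rpow_of_lt ha hc, div_neg, neg_div]

lemma eLpNorm_indicator_Ioi_inv {p : ℝ} (hp : 1 < p) :
    eLpNorm ((Ioi (1 : ℝ)).indicator fun x => x⁻¹) (ENNReal.ofReal p)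
        (volume.restrict (Ioi 0)) = ENNReal.ofReal ((p - 1) ^ (-(1 / p))) := by
  have hp0 : 0 < p := by linarith
  rw [eLpNorm_indicator_eq_eLpNorm_restrict measurableSet_Ioi,
    Measure.restrict_restrict measurableSet_Ioi,
    inter_eq_self_of_subset_left (Ioi_subset_Ioi zero_le_one),
    eLpNorm_eq_lintegral_rpow_enorm_toReal (by simpa using hp0) ofReal_ne_top,
    toReal_ofReal hp0.le]
  have hpow : ∀ x ∈ Ioi (1 : ℝ), ‖x⁻¹‖ₑ ^ p = ENNReal.ofReal (x ^ (-p)) := fun x hx => by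
    have hx0 : (0 : ℝ) < x := zero_lt_one.trans hx
    rw [enorm_eq_ofReal (inv_nonneg.2 hx0.le), ofReal_rpow_of_nonneg (inv_nonneg.2 hx0.le) hp0.le,
      inv_rpow hx0.le, rpow_neg hx0.le]
  rw [setLIntegral_congr_fun measurableSet_Ioi hpow,
    lintegral_Ioi_ofReal_rpow (by linarith) one_pos, Real.one_rpow,
    show -(-p + 1) = p - 1 by ring, ofReal_rpow_of_nonneg (by positivity) (by positivity),
    one_div, inv_rpow (by linarith), ← rpow_neg (by linarith)]

lemma gamma_mul_fracInt_indicator_Ioi_inv {α x : ℝ} (hα : 0 < α) (hx : 0 ≤ x) :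
    Gamma α * fracInt α ((Ioi (1 : ℝ)).indicator fun t => t⁻¹) x =
      ∫ t in Ioc 1 x, t⁻¹ * (x - t) ^ (α - 1) := by
  have hint : (fun t => (Ioi (1 : ℝ)).indicator (fun t => t⁻¹) t * (x - t) ^ (α - 1)) =
      (Ioi 1).indicator fun t => t⁻¹ * (x - t) ^ (α - 1) := by
    ext t
    by_cases ht : t ∈ Ioi (1 : ℝ) <;> simp [ht]
  rw [fracInt, ← mul_assoc, mul_one_div_cancel (Gamma_pos_of_pos hα).ne', one_mul,
    intervalIntegral.integral_of_le hx, hint, setIntegral_indicator measurableSet_Ioi,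
    Ioc_inter_Ioi, max_eq_right zero_le_one]

lemma rpow_mul_log_le_integral_inv_mul_rpow {α x : ℝ} (hα : α ∈ Ioo 0 1) (hx : 2 ≤ x) :
    x ^ (α - 1) * Real.log (x / 2) ≤ ∫ t in Ioc 1 x, t⁻¹ * (x - t) ^ (α - 1) := by
  have hinv : ContinuousOn (fun t : ℝ => t⁻¹) (Icc 1 x) :=
    continuousOn_inv₀.mono fun t ht => (zero_lt_one.trans_le ht.1).ne'
  have hkernel : IntervalIntegrable (fun t => (x - t) ^ (α - 1)) volume 1 x := by
    simpa using (intervalIntegral.intervalIntegrable_rpow' (a := x - 1) (b := x - x)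
      (show -1 < α - 1 by linarith [hα.1])).comp_sub_left x
  have hint : IntegrableOn (fun t => t⁻¹ * (x - t) ^ (α - 1)) (Ioc 1 x) :=
    (intervalIntegrable_iff_integrableOn_Ioc_of_le (by linarith)).1
      (hkernel.continuousOn_mul (by rwa [uIcc_of_le (by linarith)]))
  calc x ^ (α - 1) * Real.log (x / 2) = ∫ t in Ioc 1 (x / 2), t⁻¹ * x ^ (α - 1) := by
        rw [integral_mul_const, ← intervalIntegral.integral_of_le (by linarith),
          integral_inv_of_pos one_pos (by linarith), div_one, mul_comm]
    _ ≤ ∫ t in Ioc 1 (x / 2), t⁻¹ * (x - t) ^ (α - 1) := by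
        refine setIntegral_mono_on ((hinv.mono (Icc_subset_Icc_right (by linarith))).mul
          continuousOn_const |>.integrableOn_Icc.mono_set Ioc_subset_Icc_self)
          (hint.mono_set (Ioc_subset_Ioc_right (by linarith))) measurableSet_Ioc fun t ht => ?_
        have ht0 : 0 < t := zero_lt_one.trans ht.1
        exact mul_le_mul_of_nonneg_left (rpow_le_rpow_of_nonpos (by linarith [ht.2])
          (by linarith) (by linarith [hα.2])) (inv_nonneg.2 ht0.le)
    _ ≤ ∫ t in Ioc 1 x, t⁻¹ * (x - t) ^ (α - 1) :=
        setIntegral_mono_set hint (ae_restrict_of_forall_mem measurableSet_Ioc fun t ht =>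
          mul_nonneg (inv_nonneg.2 (zero_lt_one.trans ht.1).le)
            (rpow_nonneg (sub_nonneg.2 ht.2) _))
          (Ioc_subset_Ioc_right (by linarith)).eventuallyLE

lemma ofReal_mul_rpow_le_eLpNorm_of_mul_rpow_le {g : ℝ → ℝ} {s q R C : ℝ} (hq : 0 < q)
    (hsq : s * q < -1) (hR : 0 < R) (hC : 0 ≤ C) (hg : ∀ x > R, C * x ^ s ≤ g x) :
    ENNReal.ofReal (C * (R ^ (s * q + 1) / -(s * q + 1)) ^ (1 / q)) ≤
      eLpNorm g (ENNReal.ofReal q) (volume.restrict (Ioi 0)) := by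
  have hpow : ∀ x ∈ Ioi R, ENNReal.ofReal (C ^ q) * ENNReal.ofReal (x ^ (s * q)) ≤ ‖g x‖ₑ ^ q :=
    fun x hx => by
      have hx0 : 0 < x := hR.trans hx
      calc ENNReal.ofReal (C ^ q) * ENNReal.ofReal (x ^ (s * q))
          = ENNReal.ofReal (C * x ^ s) ^ q := by
            rw [← ofReal_mul (by positivity), rpow_mul hx0.le, ← mul_rpow hC (by positivity),
              ofReal_rpow_of_nonneg (by positivity) hq.le]
        _ ≤ ‖g x‖ₑ ^ q := by
            gcongr
            exact (ofReal_le_ofReal (hg x hx)).trans (ofReal_le_enorm _)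
  rw [eLpNorm_eq_lintegral_rpow_enorm_toReal (by simpa using hq) ofReal_ne_top,
    toReal_ofReal hq.le]
  calc ENNReal.ofReal (C * (R ^ (s * q + 1) / -(s * q + 1)) ^ (1 / q))
      = (ENNReal.ofReal (C ^ q) * ∫⁻ x in Ioi R, ENNReal.ofReal (x ^ (s * q))) ^ (1 / q) := by
        have hI : 0 ≤ R ^ (s * q + 1) / -(s * q + 1) := div_nonneg (by positivity) (by linarith)
        rw [lintegral_Ioi_ofReal_rpow hsq hR, ← ofReal_mul (by positivity),
          ofReal_rpow_of_nonneg (by positivity) (by positivity), mul_rpow (by positivity) hI,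
          ← rpow_mul hC, mul_one_div_cancel hq.ne', Real.rpow_one]
    _ ≤ (∫⁻ x in Ioi R, ‖g x‖ₑ ^ q) ^ (1 / q) := by
        rw [← lintegral_const_mul' _ _ ofReal_ne_top]
        gcongr ?_ ^ _
        exact setLIntegral_mono' measurableSet_Ioi hpow
    _ ≤ (∫⁻ x in Ioi 0, ‖g x‖ₑ ^ q) ^ (1 / q) := by
        gcongr ?_ ^ _
        exact lintegral_mono_set (Ioi_subset_Ioi hR.le)

lemma exponent_bounds_of_one_div_eq {α p q : ℝ} (hα : α ∈ Ioo 0 1)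
    (hp : p ∈ Ioo 1 (1 + (1 - α) / 2)) (hq : 1 / q = 1 / p - α) :
    1 ≤ q ∧ 0 < (1 - α) * q - 1 ∧ (1 - α) * q - 1 ≤ 1 ∧
      (1 - α) * q - 1 ≤ 2 / (1 - α) * (p - 1) := by
  obtain ⟨hα0, hα1⟩ := hα
  obtain ⟨hp1, hp2⟩ := hp
  have hαp : (1 - α) / 2 ≤ 1 - α * p := by nlinarith
  have hq0 : 0 < q := one_div_pos.1 <| by
    rw [hq, sub_pos, lt_div_iff₀ (by linarith)]
    linarith
  have hqp : q * (1 - α * p) = p := by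
    field_simp at hq
    linarith
  have hβ : ((1 - α) * q - 1) * (1 - α * p) = p - 1 := by linear_combination (1 - α) * hqp
  have hβ0 : 0 < (1 - α) * q - 1 := by nlinarith
  refine ⟨by nlinarith, hβ0, by nlinarith, ?_⟩
  rw [div_mul_eq_mul_div, le_div_iff₀ (by linarith)]
  nlinarith [mul_le_mul_of_nonneg_left hαp hβ0.le]

lemma inv_two_mul_exp_one_le_rpow_neg {β : ℝ} (hβ : β ∈ Ioc 0 1) :
    (2 * exp 1)⁻¹ ≤ (2 * exp β⁻¹) ^ (-β) := by
  rw [mul_rpow zero_le_two (exp_pos _).le, ← exp_mul, inv_mul_eq_div, neg_div,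
    div_self hβ.1.ne', exp_neg, mul_inv]
  gcongr
  rw [← Real.rpow_neg_one]
  exact rpow_le_rpow_of_exponent_le one_le_two (by linarith [hβ.2])

lemma inv_two_mul_exp_one_mul_rpow_le_of_le_mul {Q β q ε : ℝ} (hQ : 1 ≤ Q)
    (hβ : β ∈ Ioc 0 1) (hq : 1 ≤ q) (hε : 0 < ε) (hβQ : β ≤ Q * ε) :
    (2 * exp 1)⁻¹ * Q ^ (-2 : ℝ) * ε ^ (-1 - 1 / q) ≤
      β⁻¹ * ((2 * exp β⁻¹) ^ (-β) / β) ^ (1 / q) := by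
  have hinv_q_le : 1 / q ≤ 1 := (div_le_one (by linarith)).2 hq
  have hinv_q_pos : 0 < 1 / q := one_div_pos.2 (by linarith)
  have hQε : Q ^ (-2 : ℝ) * ε ^ (-1 - 1 / q) ≤ β ^ (-1 - 1 / q) :=
    calc Q ^ (-2 : ℝ) * ε ^ (-1 - 1 / q) ≤ Q ^ (-1 - 1 / q) * ε ^ (-1 - 1 / q) :=
          mul_le_mul_of_nonneg_right (rpow_le_rpow_of_exponent_le hQ (by linarith))
            (rpow_nonneg hε.le _)
      _ = (Q * ε) ^ (-1 - 1 / q) := (mul_rpow (by linarith) hε.le).symm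
      _ ≤ β ^ (-1 - 1 / q) := rpow_le_rpow_of_nonpos hβ.1 hβQ (by linarith)
  have h2e : (2 * exp 1)⁻¹ ≤ ((2 * exp 1)⁻¹) ^ (1 / q) := by
    simpa using rpow_le_rpow_of_exponent_ge (x := (2 * exp 1)⁻¹) (by positivity)
      (inv_le_one_of_one_le₀ (by linarith [add_one_le_exp (1 : ℝ)])) hinv_q_le
  calc (2 * exp 1)⁻¹ * Q ^ (-2 : ℝ) * ε ^ (-1 - 1 / q)
      ≤ ((2 * exp 1)⁻¹) ^ (1 / q) * β ^ (-1 - 1 / q) := by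
        rw [mul_assoc]
        exact mul_le_mul h2e hQε (by positivity) (by positivity)
    _ ≤ ((2 * exp β⁻¹) ^ (-β)) ^ (1 / q) * β ^ (-1 - 1 / q) := by
        gcongr
        exacts [rpow_nonneg hβ.1.le _, inv_two_mul_exp_one_le_rpow_neg hβ]
    _ = β⁻¹ * ((2 * exp β⁻¹) ^ (-β) / β) ^ (1 / q) := by
        rw [div_rpow (by positivity) hβ.1.le, sub_eq_add_neg, rpow_add hβ.1, Real.rpow_neg_one,
          rpow_neg hβ.1.le]
        ring

lemma exists_mul_rpow_le_eLpNorm_gamma_mul_fracInt {α : ℝ} (hα : α ∈ Ioo 0 1) :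
    ∃ c : ℝ, 0 < c ∧ ∃ δ : ℝ, 0 < δ ∧
      ∀ p q : ℝ, p ∈ Ioo 1 (1 + δ) → 1 / q = 1 / p - α →
        ENNReal.ofReal (c * (p - 1) ^ (-1 - 1 / q)) ≤
          eLpNorm (fun x => Gamma α * fracInt α ((Ioi (1 : ℝ)).indicator fun t => t⁻¹) x)
            (ENNReal.ofReal q) (volume.restrict (Ioi 0)) := by
  set Q := 2 / (1 - α)
  have hQ : 1 ≤ Q := by rw [le_div_iff₀ (by linarith [hα.2])]; linarith [hα.1]
  refine ⟨(2 * exp 1)⁻¹ * Q ^ (-2 : ℝ), by positivity, (1 - α) / 2, by linarith [hα.2],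
    fun p q hp hq => ?_⟩
  obtain ⟨hq1, hβ0, hβ1, hβQ⟩ := exponent_bounds_of_one_div_eq hα hp hq
  set β := (1 - α) * q - 1
  set R := 2 * exp β⁻¹
  have hR : 2 < R := by linarith [one_lt_exp_iff.2 (inv_pos.2 hβ0)]
  have hg : ∀ x > R, β⁻¹ * x ^ (α - 1) ≤
      Gamma α * fracInt α ((Ioi (1 : ℝ)).indicator fun t => t⁻¹) x := fun x hx => by
    have hlog : β⁻¹ ≤ Real.log (x / 2) := by
      rw [le_log_iff_exp_le (by linarith), le_div_iff₀ two_pos, mul_comm]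
      exact hx.le
    rw [gamma_mul_fracInt_indicator_Ioi_inv hα.1 (by linarith), mul_comm]
    exact (mul_le_mul_of_nonneg_left hlog (rpow_nonneg (by linarith) _)).trans
      (rpow_mul_log_le_integral_inv_mul_rpow hα (by linarith))
  have hnorm := ofReal_mul_rpow_le_eLpNorm_of_mul_rpow_le (by linarith)
    (by linarith : (α - 1) * q < -1) (by linarith) (inv_nonneg.2 hβ0.le) hg
  rw [show (α - 1) * q + 1 = -β by ring, neg_neg] at hnorm
  exact (ofReal_le_ofReal (inv_two_mul_exp_one_mul_rpow_le_of_le_mul hQ ⟨hβ0, hβ1⟩ hq1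
    (by linarith [hp.1]) hβQ)).trans hnorm

/-- Test function computation for the blow-up of `K_{I,α}(p)` as `p → 1+`:
for `f₀(x) = x⁻¹ 1_{(1,∞)}(x)` one has `‖f₀‖_p = (p-1)^{-1/p}`, and for `p` near `1`
(with `1/q = 1/p - α`) `‖Γ(α) I^α[f₀]‖_q ≥ c (p-1)^{-1-1/q}`, whence
`‖I^α f₀‖_q ≥ c' (p-1)^{α-1} ‖f₀‖_p`. -/
theorem stmt_17 (α : ℝ) (hα : α ∈ Set.Ioo (0 : ℝ) 1) :
    let f₀ : ℝ → ℝ := fun x => Set.indicator (Set.Ioi (1 : ℝ)) (fun y => y⁻¹) x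
    (∀ p : ℝ, p ∈ Set.Ioo (1 : ℝ) (1 / α) →
      eLpNorm f₀ (ENNReal.ofReal p) (volume.restrict (Set.Ioi (0 : ℝ))) =
        ENNReal.ofReal ((p - 1) ^ (-(1 / p)))) ∧
    (∃ c : ℝ, 0 < c ∧ ∃ δ : ℝ, 0 < δ ∧
      ∀ p q : ℝ, p ∈ Set.Ioo (1 : ℝ) (1 + δ) → p < 1 / α → 1 / q = 1 / p - α →
        ENNReal.ofReal (c * (p - 1) ^ (-1 - 1 / q)) ≤
          eLpNorm (fun x => Real.Gamma α * fracInt α f₀ x) (ENNReal.ofReal q)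
            (volume.restrict (Set.Ioi (0 : ℝ)))) ∧
    (∃ c' : ℝ, 0 < c' ∧ ∃ δ' : ℝ, 0 < δ' ∧
      ∀ p q : ℝ, p ∈ Set.Ioo (1 : ℝ) (1 + δ') → p < 1 / α → 1 / q = 1 / p - α →
        ENNReal.ofReal (c' * (p - 1) ^ (α - 1)) *
            eLpNorm f₀ (ENNReal.ofReal p) (volume.restrict (Set.Ioi (0 : ℝ))) ≤
          eLpNorm (fracInt α f₀) (ENNReal.ofReal q)
            (volume.restrict (Set.Ioi (0 : ℝ)))) := by
  intro f₀
  have hΓ : 0 < Gamma α := Gamma_pos_of_pos hα.1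
  obtain ⟨c, hc, δ, hδ, hlow⟩ := exists_mul_rpow_le_eLpNorm_gamma_mul_fracInt hα
  refine ⟨fun p hp => eLpNorm_indicator_Ioi_inv hp.1,
    ⟨c, hc, δ, hδ, fun p q hp _ hq => hlow p q hp hq⟩,
    c / Gamma α, div_pos hc hΓ, δ, hδ, fun p q hp _ hq => ?_⟩
  have hε : 0 < p - 1 := by linarith [hp.1]
  have hsmul : eLpNorm (fun x => Gamma α * fracInt α f₀ x) (ENNReal.ofReal q)
      (volume.restrict (Ioi 0)) =
      ENNReal.ofReal (Gamma α) * eLpNorm (fracInt α f₀) (ENNReal.ofReal q)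
        (volume.restrict (Ioi 0)) := by
    rw [← enorm_eq_ofReal hΓ.le, ← eLpNorm_const_smul]
    rfl
  rw [eLpNorm_indicator_Ioi_inv hp.1, ← ofReal_mul (by positivity), mul_assoc, ← rpow_add hε,
    show α - 1 + -(1 / p) = -1 - 1 / q by rw [hq]; ring,
    ← ENNReal.mul_le_mul_iff_right (ofReal_pos.2 hΓ).ne' ofReal_ne_top, ← hsmul,
    ← ofReal_mul hΓ.le, ← mul_assoc, mul_div_cancel₀ _ hΓ.ne']
  exact hlow p q hp hq
end
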